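/- Let 𝒟 be a complex inner product space and T : 𝒟 → 𝒟 a symmetric linear operator, i.e. ⟪Tξ, η⟫ = ⟪ξ, Tη⟫ for all ξ, η ∈ 𝒟. For p ∈ ℂ[X] let p(T) : 𝒟 → 𝒟 denote the polynomial functional calculus (evaluation of p at T). Then for every n ∈ ℕ and every polynomial p ∈ ℂ[X] of degree at most n there is a constant C > 0 such that ‖ξ‖² + ‖p(T)ξ‖² ≤ C·(‖ξ‖² + ‖Tⁿξ‖²) for all ξ ∈ 𝒟. Equivalently, the graph topology of the associated representation of the polynomial *-algebra ℂ[x] (with x = x*) is generated by the graph norms of the monomials xⁿ, n ∈ ℕ. -/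

import Mathlib

/-!
For a symmetric `T`, Cauchy–Schwarz gives
`‖T^(k+1) ξ‖² = ⟪T^k ξ, T^(k+2) ξ⟫ ≤ ‖T^k ξ‖ ‖T^(k+2) ξ‖`, so `k ↦ ‖T^k ξ‖` is log-convex
and hence bounded on `[0, n]` by `max ‖ξ‖ ‖Tⁿ ξ‖`. Expanding `p(T) ξ = ∑ cₖ T^k ξ` then bounds
`‖p(T) ξ‖` by `(∑ |cₖ|) · max ‖ξ‖ ‖Tⁿ ξ‖`.
-/

open Polynomial

theorem le_max_endpoints_of_sq_le_mul {a : ℕ → ℝ} {n : ℕ} (ha : ∀ k, 0 ≤ a k)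
    (hconv : ∀ k, k + 2 ≤ n → a (k + 1) ^ 2 ≤ a k * a (k + 2)) {k : ℕ} (hk : k ≤ n) :
    a k ≤ max (a 0) (a n) := by
  by_contra! hlt
  -- The largest maximiser `j` of `a` on `[0, n]` is interior, and log-convexity at `j`
  -- contradicts `a (j + 1) < a j`.
  classical
  obtain ⟨m, hmn, hm⟩ := (Finset.range (n + 1)).exists_max_image a ⟨0, by simp⟩
  obtain ⟨j, hjmax, hjn, hgreatest⟩ : ∃ j, (∀ i ≤ n, a i ≤ a j) ∧ j ≤ n ∧
      ∀ l, j < l → l ≤ n → ¬∀ i ≤ n, a i ≤ a l :=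
    ⟨_, Nat.findGreatest_spec (P := fun j => ∀ i ≤ n, a i ≤ a j)
      (Finset.mem_range_succ_iff.mp hmn) (fun i hi => hm i (Finset.mem_range_succ_iff.mpr hi)),
      Nat.findGreatest_le n, fun _ => Nat.findGreatest_is_greatest⟩
  have hkj : a k ≤ a j := hjmax k hk
  obtain ⟨i, rfl⟩ : ∃ i, j = i + 1 := Nat.exists_eq_add_one.mpr <| Nat.pos_of_ne_zero
    fun h0 => by rw [h0] at hkj; exact (le_max_left _ _).not_gt (hlt.trans_le hkj)
  have hin : i + 2 ≤ n := by
    refine lt_of_le_of_ne hjn fun hn => ?_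
    rw [← hn] at hlt; exact (le_max_right _ _).not_gt (hlt.trans_le hkj)
  have hnext : a (i + 2) < a (i + 1) := by
    by_contra! hge
    exact hgreatest _ (Nat.lt_succ_self _) hin fun l hl => (hjmax l hl).trans hge
  have hpos : 0 < a (i + 1) :=
    ((ha 0).trans (le_max_left _ (a n))).trans_lt (hlt.trans_le hkj)
  nlinarith [hconv i hin, hjmax i (by omega), ha i, ha (i + 2)]

section Symmetric

variable {𝕜 E : Type*} [RCLike 𝕜] [SeminormedAddCommGroup E] [InnerProductSpace 𝕜 E]
  {T : E →ₗ[𝕜] E}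

theorem LinearMap.IsSymmetric.norm_apply_sq_le (hT : T.IsSymmetric) (x : E) :
    ‖T x‖ ^ 2 ≤ ‖x‖ * ‖T (T x)‖ :=
  calc ‖T x‖ ^ 2 = RCLike.re (inner 𝕜 (T x) (T x)) := (inner_self_eq_norm_sq _).symm
    _ = RCLike.re (inner 𝕜 x (T (T x))) := by rw [hT]
    _ ≤ ‖inner 𝕜 x (T (T x))‖ := RCLike.re_le_norm _
    _ ≤ ‖x‖ * ‖T (T x)‖ := norm_inner_le_norm _ _

theorem LinearMap.IsSymmetric.norm_pow_apply_le_max (hT : T.IsSymmetric) (x : E) {k n : ℕ}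
    (hk : k ≤ n) : ‖(T ^ k) x‖ ≤ max ‖x‖ ‖(T ^ n) x‖ := by
  simpa using le_max_endpoints_of_sq_le_mul (a := fun k => ‖(T ^ k) x‖)
    (fun _ => norm_nonneg _) (fun k _ => by
      simpa only [pow_succ', Module.End.mul_apply] using hT.norm_apply_sq_le ((T ^ k) x)) hk

end Symmetric

theorem Polynomial.norm_aeval_apply_le {𝕜 E : Type*} [NormedField 𝕜]
    [SeminormedAddCommGroup E] [NormedSpace 𝕜 E] (T : Module.End 𝕜 E) (x : E) {p : 𝕜[X]} {n : ℕ}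
    (hp : p.natDegree ≤ n) {M : ℝ} (hM : ∀ k ≤ n, ‖(T ^ k) x‖ ≤ M) :
    ‖aeval T p x‖ ≤ (∑ i ∈ Finset.range (n + 1), ‖p.coeff i‖) * M := by
  rw [aeval_eq_sum_range' (Nat.lt_succ_of_le hp), LinearMap.sum_apply, Finset.sum_mul]
  refine (norm_sum_le _ _).trans (Finset.sum_le_sum fun i hi => ?_)
  rw [LinearMap.smul_apply, norm_smul]
  exact mul_le_mul_of_nonneg_left (hM i (Finset.mem_range_succ_iff.mp hi)) (norm_nonneg _)

theorem max_sq_le_sq_add_sq (a b : ℝ) : max a b ^ 2 ≤ a ^ 2 + b ^ 2 := by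
  rcases le_total a b with h | h
  · rw [max_eq_right h]; nlinarith
  · rw [max_eq_left h]; nlinarith

theorem graph_norm_poly_le (𝒟 : Type*) [NormedAddCommGroup 𝒟] [InnerProductSpace ℂ 𝒟]
    (T : Module.End ℂ 𝒟) (hT : ∀ ξ η : 𝒟, (inner ℂ (T ξ) η : ℂ) = inner ℂ ξ (T η))
    (n : ℕ) (p : Polynomial ℂ) (hp : p.natDegree ≤ n) :
    ∃ C > (0 : ℝ), ∀ ξ : 𝒟,
      ‖ξ‖ ^ 2 + ‖(Polynomial.aeval T p) ξ‖ ^ 2 ≤ C * (‖ξ‖ ^ 2 + ‖(T ^ n) ξ‖ ^ 2) := by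
  set S := ∑ i ∈ Finset.range (n + 1), ‖p.coeff i‖
  refine ⟨1 + S ^ 2, by positivity, fun ξ => ?_⟩
  set Q := ‖ξ‖ ^ 2 + ‖(T ^ n) ξ‖ ^ 2
  have hpξ : ‖aeval T p ξ‖ ≤ S * max ‖ξ‖ ‖(T ^ n) ξ‖ :=
    norm_aeval_apply_le T ξ hp fun _ hk => LinearMap.IsSymmetric.norm_pow_apply_le_max hT ξ hk
  have hpξ_sq : ‖aeval T p ξ‖ ^ 2 ≤ S ^ 2 * Q :=
    calc ‖aeval T p ξ‖ ^ 2 ≤ (S * max ‖ξ‖ ‖(T ^ n) ξ‖) ^ 2 :=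
          pow_le_pow_left₀ (norm_nonneg _) hpξ 2
      _ = S ^ 2 * max ‖ξ‖ ‖(T ^ n) ξ‖ ^ 2 := mul_pow _ _ _
      _ ≤ S ^ 2 * Q := mul_le_mul_of_nonneg_left (max_sq_le_sq_add_sq _ _) (sq_nonneg S)
  calc ‖ξ‖ ^ 2 + ‖aeval T p ξ‖ ^ 2 ≤ Q + S ^ 2 * Q :=
        add_le_add (le_add_of_nonneg_right (sq_nonneg _)) hpξ_sq
    _ = (1 + S ^ 2) * Q := by ring
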